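/- Convergence of the moments of the truncated effective noise (convergence part of Theorem 3.4): suppose that for every m ≥ 0, every k = 1,…,v and every j = 1,…,d the functions x ↦ u⁽ᵏ⁾(x, tₘ) and x ↦ G⁽ᵏʲ⁾(x, tₘ) are real-analytic on ℝᵛ with multi-index Taylor series at every point converging absolutely on all of ℝᵛ, and suppose there are finite constants A⁽ʲ⁾ₘ with |ΔW⁽ʲ⁾ₘ(ω)| ≤ A⁽ʲ⁾ₘ for all m, j and all ω ∈ Ω. Then for every n ≥ 1 and every v-dimensional multi-index r, lim_{N→∞} E[(ΔŴₙ,₍N₎)ʳ] = E[(ΔŴₙ)ʳ]. -/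

import Mathlib

/-!
For fixed `ω`, the recursion for `ΔŴₙ,₍N₎` is the exact recursion for `ΔŴₙ` with the increments
`u(x̂ᶜₙ + y) − u(x̂ᶜₙ)` and `G(x̂ᶜₙ + y)` replaced by partial sums of their Taylor series at
`x̂ᶜₙ`, which converge absolutely on all of `ℝᵛ`. By induction on `n`, the iterates `ΔŴₙ,₍N₎(ω)`
stay in a fixed box, uniformly in `N` and `ω` (the partial sums are dominated by the absolute
series on the box, and `ΔWₙ` is bounded), and converge to `ΔŴₙ(ω)` by Tannery's theorem.
The moments then converge by dominated convergence.
-/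

open MeasureTheory Finset Filter

/-- Partial derivative of `f : ℝᵛ → ℝ` in the `k`-th coordinate direction. -/
noncomputable def pd1 {v : ℕ} (k : Fin v) (f : (Fin v → ℝ) → ℝ) : (Fin v → ℝ) → ℝ :=
  fun x => deriv (fun s => f (Function.update x k s)) (x k)

/-- Mixed partial derivative `∂ʳ f` associated with the multi-index `r`. -/
noncomputable def mpd {v : ℕ} (r : Fin v → ℕ) (f : (Fin v → ℝ) → ℝ) : (Fin v → ℝ) → ℝ :=
  ((List.ofFn fun k : Fin v => (pd1 k)^[r k]).foldr (· ∘ ·) id) f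

/-- The finset of `v`-dimensional multi-indices with every component `≤ N`
(it contains all multi-indices `r` with `|r| ≤ N`). -/
def midx (v N : ℕ) : Finset (Fin v → ℕ) := Fintype.piFinset fun _ => Finset.range (N + 1)

section PowerSeries

variable {v : ℕ}

theorem abs_prod_pow_le {y R : Fin v → ℝ} (hy : ∀ l, |y l| ≤ R l) (r : Fin v → ℕ) :
    |∏ l, y l ^ r l| ≤ |∏ l, R l ^ r l| := by
  simp only [Finset.abs_prod, abs_pow]
  exact Finset.prod_le_prod (fun _ _ => by positivity) fun l _ =>
    pow_le_pow_left₀ (abs_nonneg _) ((hy l).trans (le_abs_self _)) _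

theorem abs_sum_mul_prod_pow_le_tsum {a : (Fin v → ℕ) → ℝ} {R : Fin v → ℝ}
    (ha : Summable fun r => a r * ∏ l, R l ^ r l) {y : Fin v → ℝ} (hy : ∀ l, |y l| ≤ R l)
    (s : Finset (Fin v → ℕ)) :
    |∑ r ∈ s, a r * ∏ l, y l ^ r l| ≤ ∑' r, |a r * ∏ l, R l ^ r l| :=
  calc |∑ r ∈ s, a r * ∏ l, y l ^ r l|
      ≤ ∑ r ∈ s, |a r * ∏ l, R l ^ r l| := by
        refine (Finset.abs_sum_le_sum_abs _ _).trans (Finset.sum_le_sum fun r _ => ?_)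
        rw [abs_mul, abs_mul]
        exact mul_le_mul_of_nonneg_left (abs_prod_pow_le hy r) (abs_nonneg _)
    _ ≤ ∑' r, |a r * ∏ l, R l ^ r l| := ha.abs.sum_le_tsum s fun r _ => abs_nonneg _

theorem tendsto_sum_mul_prod_pow {a : (Fin v → ℕ) → ℝ} {R : Fin v → ℝ}
    (ha : Summable fun r => a r * ∏ l, R l ^ r l) {y : ℕ → Fin v → ℝ} {y₀ : Fin v → ℝ}
    (hy : Tendsto y atTop (nhds y₀)) (hyR : ∀ᶠ N in atTop, ∀ l, |y N l| ≤ R l)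
    {s : ℕ → Finset (Fin v → ℕ)} {t : Set (Fin v → ℕ)} (hst : ∀ N, ↑(s N) ⊆ t)
    (hts : ∀ r ∈ t, ∀ᶠ N in atTop, r ∈ s N) {S : ℝ}
    (hS : HasSum (t.indicator fun r => a r * ∏ l, y₀ l ^ r l) S) :
    Tendsto (fun N => ∑ r ∈ s N, a r * ∏ l, y N l ^ r l) atTop (nhds S) := by
  have hfin : ∀ N, ∑ r ∈ s N, a r * ∏ l, y N l ^ r l
      = ∑' r, (s N : Set (Fin v → ℕ)).indicator (fun r => a r * ∏ l, y N l ^ r l) r :=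
    fun N => sum_eq_tsum_indicator _ _
  simp_rw [hfin, ← hS.tsum_eq]
  refine tendsto_tsum_of_dominated_convergence ha.norm (fun r => ?_) ?_
  · by_cases hr : r ∈ t
    · have hterm : Tendsto (fun N => a r * ∏ l, y N l ^ r l) atTop
          (nhds (a r * ∏ l, y₀ l ^ r l)) :=
        tendsto_const_nhds.mul <| tendsto_finsetProd _ fun l _ =>
          ((continuous_apply l).tendsto y₀ |>.comp hy).pow (r l)
      rw [Set.indicator_of_mem hr]
      refine hterm.congr' ?_
      filter_upwards [hts r hr] with N hN
      rw [Set.indicator_of_mem (Finset.mem_coe.2 hN)]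
    · have hN : ∀ N, r ∉ (s N : Set (Fin v → ℕ)) := fun N hN => hr (hst N hN)
      simp only [Set.indicator_of_notMem hr, Set.indicator_of_notMem (hN _),
        tendsto_const_nhds]
  · filter_upwards [hyR] with N hN r
    refine (norm_indicator_le_norm_self _ r).trans ?_
    simp only [Real.norm_eq_abs, abs_mul]
    exact mul_le_mul_of_nonneg_left (abs_prod_pow_le hN r) (abs_nonneg _)

theorem one_le_sum_iff_ne_zero {r : Fin v → ℕ} : 1 ≤ ∑ l, r l ↔ r ≠ 0 := by
  simp [Nat.one_le_iff_ne_zero, Finset.sum_eq_zero_iff, funext_iff]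

def HasEntirePowerSeriesAt (f : (Fin v → ℝ) → ℝ) (a : (Fin v → ℕ) → ℝ) (c : Fin v → ℝ) :
    Prop :=
  ∀ y, HasSum (fun r => a r * ∏ l, y l ^ r l) (f (c + y))

namespace HasEntirePowerSeriesAt

variable {f : (Fin v → ℝ) → ℝ} {a : (Fin v → ℕ) → ℝ} {c : Fin v → ℝ}

theorem coeff_zero (hf : HasEntirePowerSeriesAt f a c) : a 0 = f c := by
  have h0 : HasSum (fun r => a r * ∏ l, (0 : Fin v → ℝ) l ^ r l) (a 0) := by
    convert hasSum_single (0 : Fin v → ℕ) fun r hr => ?_ using 1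
    · simp
    · obtain ⟨l, hl⟩ := Function.ne_iff.1 hr
      rw [Pi.zero_apply] at hl
      exact mul_eq_zero_of_right _ (Finset.prod_eq_zero (Finset.mem_univ l) (zero_pow hl))
  simpa using h0.unique (hf 0)

theorem hasSum_indicator_ne_zero (hf : HasEntirePowerSeriesAt f a c) (y : Fin v → ℝ) :
    HasSum ({r | r ≠ 0}.indicator fun r => a r * ∏ l, y l ^ r l) (f (c + y) - f c) := by
  have h := hasSum_ite_sub_hasSum (hf y) 0
  simp only [Pi.zero_apply, pow_zero, Finset.prod_const_one, mul_one, hf.coeff_zero] at h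
  have hind : ({r | r ≠ 0}.indicator fun r => a r * ∏ l, y l ^ r l)
      = fun r => if r = 0 then 0 else a r * ∏ l, y l ^ r l := by
    funext r
    by_cases hr : r = 0 <;> simp [hr]
  rwa [hind]

end HasEntirePowerSeriesAt

end PowerSeries

section EulerMaruyama

variable {v d : ℕ}

def driftIndices (v N : ℕ) : Finset (Fin v → ℕ) :=
  (midx v N).filter fun r => 1 ≤ ∑ l, r l ∧ ∑ l, r l ≤ N

def diffusionIndices (v N : ℕ) : Finset (Fin v → ℕ) :=
  (midx v N).filter fun r => (∑ l, r l) + 1 ≤ N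

theorem mem_midx_of_sum_le {r : Fin v → ℕ} {N : ℕ} (hr : ∑ l, r l ≤ N) : r ∈ midx v N :=
  Fintype.mem_piFinset.2 fun l => Finset.mem_range_succ_iff.2 <|
    (Finset.single_le_sum (fun _ _ => Nat.zero_le _) (Finset.mem_univ l)).trans hr

theorem coe_driftIndices_subset (N : ℕ) :
    (driftIndices v N : Set (Fin v → ℕ)) ⊆ {r | r ≠ 0} :=
  fun _ hr => one_le_sum_iff_ne_zero.1 (Finset.mem_filter.1 hr).2.1

theorem eventually_mem_driftIndices {r : Fin v → ℕ} (hr : r ≠ 0) :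
    ∀ᶠ N in atTop, r ∈ driftIndices v N := by
  filter_upwards [eventually_ge_atTop (∑ l, r l)] with N hN
  exact Finset.mem_filter.2 ⟨mem_midx_of_sum_le hN, one_le_sum_iff_ne_zero.2 hr, hN⟩

theorem eventually_mem_diffusionIndices (r : Fin v → ℕ) :
    ∀ᶠ N in atTop, r ∈ diffusionIndices v N := by
  filter_upwards [eventually_ge_atTop (∑ l, r l + 1)] with N hN
  exact Finset.mem_filter.2 ⟨mem_midx_of_sum_le (by omega), hN⟩

/-- One step `ΔŴₙ,₍N₎ ↦ ΔŴₙ₊₁,₍N₎`, with `a k` the Taylor coefficients of `u⁽ᵏ⁾` and `b k j`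
those of `G⁽ᵏʲ⁾` at the current point of the Euler sequence, and `w = ΔWₙ₊₁`. -/
def truncatedStep (a : Fin v → (Fin v → ℕ) → ℝ) (b : Fin v → Fin d → (Fin v → ℕ) → ℝ) (h : ℝ)
    (N : ℕ) (y : Fin v → ℝ) (w : Fin d → ℝ) : Fin v → ℝ := fun k =>
  y k + h * ∑ r ∈ driftIndices v N, a k r * ∏ l, y l ^ r l
    + ∑ r ∈ diffusionIndices v N, ∑ j, b k j r * w j * ∏ l, y l ^ r l

/-- One step `ΔŴₙ ↦ ΔŴₙ₊₁` of the effective noise around the Euler point `c = x̂ᶜₙ`. -/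
def effectiveStep (U : (Fin v → ℝ) → Fin v → ℝ) (S : (Fin v → ℝ) → Matrix (Fin v) (Fin d) ℝ)
    (c : Fin v → ℝ) (h : ℝ) (y : Fin v → ℝ) (w : Fin d → ℝ) : Fin v → ℝ :=
  y + h • (U (c + y) - U c) + (S (c + y)).mulVec w

theorem add_euler_maruyama_sub_euler (U : (Fin v → ℝ) → Fin v → ℝ)
    (S : (Fin v → ℝ) → Matrix (Fin v) (Fin d) ℝ) (c : Fin v → ℝ) (h : ℝ) (y : Fin v → ℝ)
    (w : Fin d → ℝ) :
    c + y + h • U (c + y) + (S (c + y)).mulVec w - (c + h • U c) = effectiveStep U S c h y w := by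
  simp only [effectiveStep, smul_sub]
  abel

theorem truncatedStep_apply (a : Fin v → (Fin v → ℕ) → ℝ) (b : Fin v → Fin d → (Fin v → ℕ) → ℝ)
    (h : ℝ) (N : ℕ) (y : Fin v → ℝ) (w : Fin d → ℝ) (k : Fin v) :
    truncatedStep a b h N y w k = y k + h * ∑ r ∈ driftIndices v N, a k r * ∏ l, y l ^ r l
      + ∑ j, (∑ r ∈ diffusionIndices v N, b k j r * ∏ l, y l ^ r l) * w j := by
  rw [truncatedStep, Finset.sum_comm]
  simp only [Finset.sum_mul, mul_right_comm]

theorem abs_truncatedStep_le {a : Fin v → (Fin v → ℕ) → ℝ} {b : Fin v → Fin d → (Fin v → ℕ) → ℝ}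
    {R : Fin v → ℝ} (ha : ∀ k, Summable fun r => a k r * ∏ l, R l ^ r l)
    (hb : ∀ k j, Summable fun r => b k j r * ∏ l, R l ^ r l) {y : Fin v → ℝ}
    (hy : ∀ l, |y l| ≤ R l) {w : Fin d → ℝ} {A : Fin d → ℝ} (hw : ∀ j, |w j| ≤ A j)
    (h : ℝ) (N : ℕ) (k : Fin v) :
    |truncatedStep a b h N y w k| ≤ R k + |h| * ∑' r, |a k r * ∏ l, R l ^ r l|
      + ∑ j, (∑' r, |b k j r * ∏ l, R l ^ r l|) * A j := by
  rw [truncatedStep_apply]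
  refine (abs_add_three _ _ _).trans (add_le_add_three (hy k) ?_ ?_)
  · rw [abs_mul]
    exact mul_le_mul_of_nonneg_left (abs_sum_mul_prod_pow_le_tsum (ha k) hy _) (abs_nonneg h)
  · refine (Finset.abs_sum_le_sum_abs _ _).trans (Finset.sum_le_sum fun j _ => ?_)
    rw [abs_mul]
    exact mul_le_mul (abs_sum_mul_prod_pow_le_tsum (hb k j) hy _) (hw j) (abs_nonneg _)
      (tsum_nonneg fun _ => abs_nonneg _)

theorem tendsto_truncatedStep {U : (Fin v → ℝ) → Fin v → ℝ}
    {S : (Fin v → ℝ) → Matrix (Fin v) (Fin d) ℝ} {a : Fin v → (Fin v → ℕ) → ℝ}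
    {b : Fin v → Fin d → (Fin v → ℕ) → ℝ} {c : Fin v → ℝ}
    (hU : ∀ k, HasEntirePowerSeriesAt (fun x => U x k) (a k) c)
    (hS : ∀ k j, HasEntirePowerSeriesAt (fun x => S x k j) (b k j) c)
    {y : ℕ → Fin v → ℝ} {y₀ R : Fin v → ℝ} (hy : Tendsto y atTop (nhds y₀))
    (hyR : ∀ᶠ N in atTop, ∀ l, |y N l| ≤ R l) (h : ℝ) (w : Fin d → ℝ) :
    Tendsto (fun N => truncatedStep a b h N (y N) w) atTop
      (nhds (effectiveStep U S c h y₀ w)) := by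
  refine tendsto_pi_nhds.2 fun k => ?_
  simp only [truncatedStep_apply, effectiveStep, Pi.add_apply, Pi.smul_apply, Pi.sub_apply,
    smul_eq_mul, Matrix.mulVec, dotProduct]
  have hdrift := tendsto_sum_mul_prod_pow (hU k R).summable hy hyR coe_driftIndices_subset
    (fun _ hr => eventually_mem_driftIndices hr) ((hU k).hasSum_indicator_ne_zero y₀)
  have hdiffusion : ∀ j, Tendsto
      (fun N => ∑ r ∈ diffusionIndices v N, b k j r * ∏ l, y N l ^ r l) atTop
      (nhds (S (c + y₀) k j)) := fun j =>
    tendsto_sum_mul_prod_pow (hS k j R).summable hy hyR (fun _ => Set.subset_univ _)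
      (fun r _ => eventually_mem_diffusionIndices r) (by simpa using hS k j y₀)
  exact (((continuous_apply k).tendsto y₀).comp hy |>.add (hdrift.const_mul h)).add
    (tendsto_finsetSum _ fun j _ => (hdiffusion j).mul_const (w j))

theorem continuous_truncatedStep (a : Fin v → (Fin v → ℕ) → ℝ)
    (b : Fin v → Fin d → (Fin v → ℕ) → ℝ) (h : ℝ) (N : ℕ) :
    Continuous fun p : (Fin v → ℝ) × (Fin d → ℝ) => truncatedStep a b h N p.1 p.2 := by
  unfold truncatedStep
  fun_prop

end EulerMaruyama

section TruncatedEffectiveNoise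

variable {v d : ℕ} {Ω : Type*} {a : ℕ → Fin v → (Fin v → ℕ) → ℝ}
  {b : ℕ → Fin v → Fin d → (Fin v → ℕ) → ℝ} {h : ℝ} {w : ℕ → Ω → Fin d → ℝ}
  {Y : ℕ → ℕ → Ω → Fin v → ℝ}

theorem exists_bound_tendsto_truncated {U : ℕ → (Fin v → ℝ) → Fin v → ℝ}
    {S : ℕ → (Fin v → ℝ) → Matrix (Fin v) (Fin d) ℝ} {c : ℕ → Fin v → ℝ}
    (hU : ∀ n k, HasEntirePowerSeriesAt (fun x => U n x k) (a n k) (c n))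
    (hS : ∀ n k j, HasEntirePowerSeriesAt (fun x => S n x k j) (b n k j) (c n))
    {A : ℕ → Fin d → ℝ} (hw : ∀ n j ω, |w n ω j| ≤ A n j)
    {Y₀ : ℕ → Ω → Fin v → ℝ} (hY₀0 : ∀ ω, Y₀ 0 ω = 0)
    (hY₀ : ∀ n ω, Y₀ (n + 1) ω = effectiveStep (U n) (S n) (c n) h (Y₀ n ω) (w (n + 1) ω))
    (hY0 : ∀ N ω, Y N 0 ω = 0)
    (hY : ∀ N, 1 ≤ N → ∀ n ω, Y N (n + 1) ω = truncatedStep (a n) (b n) h N (Y N n ω) (w (n + 1) ω))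
    (n : ℕ) :
    ∃ R : Fin v → ℝ, (∀ N, 1 ≤ N → ∀ ω l, |Y N n ω l| ≤ R l) ∧
      ∀ ω, Tendsto (fun N => Y N n ω) atTop (nhds (Y₀ n ω)) := by
  induction n with
  | zero => exact ⟨0, fun N _ ω l => by simp [hY0], fun ω => by simp [hY0, hY₀0]⟩
  | succ n ih =>
    obtain ⟨R, hR, hlim⟩ := ih
    refine ⟨fun k => R k + |h| * ∑' r, |a n k r * ∏ l, R l ^ r l|
      + ∑ j, (∑' r, |b n k j r * ∏ l, R l ^ r l|) * A (n + 1) j, fun N hN ω k => ?_, fun ω => ?_⟩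
    · rw [hY N hN]
      exact abs_truncatedStep_le (fun k => (hU n k R).summable) (fun k j => (hS n k j R).summable)
        (hR N hN ω) (fun j => hw (n + 1) j ω) h N k
    · rw [hY₀]
      refine (tendsto_truncatedStep (hU n) (hS n) (hlim ω)
        (eventually_atTop.2 ⟨1, fun N hN => hR N hN ω⟩) h _).congr' ?_
      filter_upwards [eventually_ge_atTop 1] with N hN
      rw [hY N hN]

theorem measurable_truncated [MeasurableSpace Ω] (hw : ∀ n, Measurable (w n))
    (hY0 : ∀ N ω, Y N 0 ω = 0)
    (hY : ∀ N, 1 ≤ N → ∀ n ω, Y N (n + 1) ω = truncatedStep (a n) (b n) h N (Y N n ω) (w (n + 1) ω))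
    {N : ℕ} (hN : 1 ≤ N) (n : ℕ) : Measurable (Y N n) := by
  induction n with
  | zero => simp only [funext (hY0 N), measurable_const]
  | succ n ih =>
    rw [funext (hY N hN n)]
    exact (continuous_truncatedStep _ _ h N).measurable.comp (ih.prodMk (hw (n + 1)))

end TruncatedEffectiveNoise

theorem tendsto_integral_prod_pow_of_bounded {v : ℕ} {Ω : Type*} [MeasurableSpace Ω]
    {μ : Measure Ω} [IsFiniteMeasure μ] {X : ℕ → Ω → Fin v → ℝ} {X₀ : Ω → Fin v → ℝ}
    {R : Fin v → ℝ} (hX : ∀ᶠ N in atTop, Measurable (X N))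
    (hXR : ∀ᶠ N in atTop, ∀ ω l, |X N ω l| ≤ R l)
    (hlim : ∀ ω, Tendsto (fun N => X N ω) atTop (nhds (X₀ ω))) (r : Fin v → ℕ) :
    Tendsto (fun N => ∫ ω, ∏ l, X N ω l ^ r l ∂μ) atTop
      (nhds (∫ ω, ∏ l, X₀ ω l ^ r l ∂μ)) := by
  refine tendsto_integral_filter_of_dominated_convergence (fun _ => |∏ l, R l ^ r l|) ?_ ?_
    (integrable_const _) (Eventually.of_forall fun ω => ?_)
  · filter_upwards [hX] with N hN
    exact (Finset.measurable_prod _ fun l _ => ((measurable_pi_apply l).comp hN).pow_const _)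
      |>.aestronglyMeasurable
  · filter_upwards [hXR] with N hN
    exact Eventually.of_forall fun ω => abs_prod_pow_le (hN ω) r
  · exact tendsto_finsetProd _ fun l _ => ((continuous_apply l).tendsto _ |>.comp (hlim ω)).pow _

theorem truncated_effective_noise_moment_convergence_general
    (v d : ℕ)
    (h : ℝ) (t0 : ℝ) (x0 : Fin v → ℝ)
    (u : (Fin v → ℝ) → ℝ → (Fin v → ℝ))
    (G : (Fin v → ℝ) → ℝ → Matrix (Fin v) (Fin d) ℝ)
    {Ω : Type*} [MeasurableSpace Ω] (P : Measure Ω) [IsProbabilityMeasure P]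
    (dW : ℕ → Ω → (Fin d → ℝ))
    (Xhat : ℕ → Ω → (Fin v → ℝ)) (xc : ℕ → (Fin v → ℝ))
    (hX0 : ∀ ω, Xhat 0 ω = x0)
    (hX : ∀ (n : ℕ) (ω : Ω), Xhat (n + 1) ω
        = Xhat n ω + h • u (Xhat n ω) (t0 + n * h)
          + (G (Xhat n ω) (t0 + n * h)).mulVec (dW (n + 1) ω))
    (hxc0 : xc 0 = x0)
    (hxc : ∀ n : ℕ, xc (n + 1) = xc n + h • u (xc n) (t0 + n * h))
    (DW : ℕ → Ω → (Fin v → ℝ))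
    (hDW : ∀ (n : ℕ) (ω : Ω), DW n ω = Xhat n ω - xc n)
    (DWt : ℕ → ℕ → Ω → (Fin v → ℝ))
    (hDWt0 : ∀ (N : ℕ) (ω : Ω), DWt N 0 ω = 0)
    (hDWt : ∀ N : ℕ, 1 ≤ N → ∀ (n : ℕ) (ω : Ω) (k : Fin v), DWt N (n + 1) ω k
      = DWt N n ω k
        + h * ∑ r ∈ (midx v N).filter (fun r => 1 ≤ ∑ l, r l ∧ ∑ l, r l ≤ N),
            (1 / ((∏ l, Nat.factorial (r l) : ℕ) : ℝ))
              * mpd r (fun x => u x (t0 + n * h) k) (xc n) * ∏ l, (DWt N n ω l) ^ (r l)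
        + ∑ r ∈ (midx v N).filter (fun r => (∑ l, r l) + 1 ≤ N),
            ∑ j : Fin d,
              (1 / ((∏ l, Nat.factorial (r l) : ℕ) : ℝ))
                * mpd r (fun x => G x (t0 + n * h) k j) (xc n)
                * dW (n + 1) ω j * ∏ l, (DWt N n ω l) ^ (r l))
    (hUanalytic : ∀ (m : ℕ) (k : Fin v) (c y : Fin v → ℝ), HasSum
      (fun r : Fin v → ℕ =>
        (1 / ((∏ l, Nat.factorial (r l) : ℕ) : ℝ))
          * mpd r (fun x => u x (t0 + m * h) k) c * ∏ l, (y l) ^ (r l))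
      (u (c + y) (t0 + m * h) k))
    (hGanalytic : ∀ (m : ℕ) (k : Fin v) (j : Fin d) (c y : Fin v → ℝ), HasSum
      (fun r : Fin v → ℕ =>
        (1 / ((∏ l, Nat.factorial (r l) : ℕ) : ℝ))
          * mpd r (fun x => G x (t0 + m * h) k j) c * ∏ l, (y l) ^ (r l))
      (G (c + y) (t0 + m * h) k j))
    (A : ℕ → Fin d → ℝ)
    (hA : ∀ (m : ℕ) (j : Fin d) (ω : Ω), |dW m ω j| ≤ A m j)
    (hmeas : ∀ m : ℕ, Measurable (dW m)) :
    ∀ (n : ℕ), 1 ≤ n → ∀ r : Fin v → ℕ,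
      Filter.Tendsto (fun N : ℕ => ∫ ω, ∏ k, (DWt N n ω k) ^ (r k) ∂P)
        Filter.atTop (nhds (∫ ω, ∏ k, (DW n ω k) ^ (r k) ∂P)) := by
  have hexact : ∀ n ω, DW (n + 1) ω = effectiveStep (fun x => u x (t0 + n * h))
      (fun x => G x (t0 + n * h)) (xc n) h (DW n ω) (dW (n + 1) ω) := fun n ω => by
    have hXhat : Xhat n ω = xc n + DW n ω := by rw [hDW]; abel
    rw [hDW, hX, hxc, hXhat]
    exact add_euler_maruyama_sub_euler (fun x => u x (t0 + n * h)) (fun x => G x (t0 + n * h))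
      (xc n) h (DW n ω) (dW (n + 1) ω)
  have htrunc : ∀ N, 1 ≤ N → ∀ n ω, DWt N (n + 1) ω = truncatedStep
      (fun k r => (1 / ((∏ l, Nat.factorial (r l) : ℕ) : ℝ))
        * mpd r (fun x => u x (t0 + n * h) k) (xc n))
      (fun k j r => (1 / ((∏ l, Nat.factorial (r l) : ℕ) : ℝ))
        * mpd r (fun x => G x (t0 + n * h) k j) (xc n)) h N (DWt N n ω) (dW (n + 1) ω) :=
    fun N hN n ω => funext (hDWt N hN n ω)
  have hDW0 : ∀ ω, DW 0 ω = 0 := fun ω => by rw [hDW, hX0, hxc0, sub_self]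
  intro n _ r
  obtain ⟨R, hR, hlim⟩ := exists_bound_tendsto_truncated
    (U := fun n x => u x (t0 + n * h)) (S := fun n x => G x (t0 + n * h)) (c := xc)
    (fun n k => hUanalytic n k (xc n)) (fun n k j => hGanalytic n k j (xc n)) hA
    hDW0 hexact hDWt0 htrunc n
  exact tendsto_integral_prod_pow_of_bounded
    (eventually_atTop.2 ⟨1, fun N hN => measurable_truncated hmeas hDWt0 htrunc hN n⟩)
    (eventually_atTop.2 ⟨1, hR⟩) hlim r

/-- **Convergence of the moments of the truncated effective noise
(convergence part of Theorem 3.4).**  Under global analyticity of the coefficients and uniform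
boundedness of the noise increments, for every `n ≥ 1` and every multi-index `r`,
`E[(ΔŴₙ,₍N₎)ʳ] → E[(ΔŴₙ)ʳ]` as `N → ∞`. -/
theorem truncated_effective_noise_moment_convergence
    (v d : ℕ) (hv : 1 ≤ v) (hd : 1 ≤ d)
    (h : ℝ) (hh : 0 < h) (t0 : ℝ) (x0 : Fin v → ℝ)
    (u : (Fin v → ℝ) → ℝ → (Fin v → ℝ))
    (G : (Fin v → ℝ) → ℝ → Matrix (Fin v) (Fin d) ℝ)
    {Ω : Type*} [MeasurableSpace Ω] (P : Measure Ω) [IsProbabilityMeasure P]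
    (dW : ℕ → Ω → (Fin d → ℝ))
    (Xhat : ℕ → Ω → (Fin v → ℝ)) (xc : ℕ → (Fin v → ℝ))
    (hX0 : ∀ ω, Xhat 0 ω = x0)
    (hX : ∀ (n : ℕ) (ω : Ω), Xhat (n + 1) ω
        = Xhat n ω + h • u (Xhat n ω) (t0 + n * h)
          + (G (Xhat n ω) (t0 + n * h)).mulVec (dW (n + 1) ω))
    (hxc0 : xc 0 = x0)
    (hxc : ∀ n : ℕ, xc (n + 1) = xc n + h • u (xc n) (t0 + n * h))
    (DW : ℕ → Ω → (Fin v → ℝ))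
    (hDW : ∀ (n : ℕ) (ω : Ω), DW n ω = Xhat n ω - xc n)
    (DWt : ℕ → ℕ → Ω → (Fin v → ℝ))
    (hDWt0 : ∀ (N : ℕ) (ω : Ω), DWt N 0 ω = 0)
    (hDWt : ∀ N : ℕ, 1 ≤ N → ∀ (n : ℕ) (ω : Ω) (k : Fin v), DWt N (n + 1) ω k
      = DWt N n ω k
        + h * ∑ r ∈ (midx v N).filter (fun r => 1 ≤ ∑ l, r l ∧ ∑ l, r l ≤ N),
            (1 / ((∏ l, Nat.factorial (r l) : ℕ) : ℝ))
              * mpd r (fun x => u x (t0 + n * h) k) (xc n) * ∏ l, (DWt N n ω l) ^ (r l)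
        + ∑ r ∈ (midx v N).filter (fun r => (∑ l, r l) + 1 ≤ N),
            ∑ j : Fin d,
              (1 / ((∏ l, Nat.factorial (r l) : ℕ) : ℝ))
                * mpd r (fun x => G x (t0 + n * h) k j) (xc n)
                * dW (n + 1) ω j * ∏ l, (DWt N n ω l) ^ (r l))
    (hUanalytic : ∀ (m : ℕ) (k : Fin v) (c y : Fin v → ℝ), HasSum
      (fun r : Fin v → ℕ =>
        (1 / ((∏ l, Nat.factorial (r l) : ℕ) : ℝ))
          * mpd r (fun x => u x (t0 + m * h) k) c * ∏ l, (y l) ^ (r l))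
      (u (c + y) (t0 + m * h) k))
    (hGanalytic : ∀ (m : ℕ) (k : Fin v) (j : Fin d) (c y : Fin v → ℝ), HasSum
      (fun r : Fin v → ℕ =>
        (1 / ((∏ l, Nat.factorial (r l) : ℕ) : ℝ))
          * mpd r (fun x => G x (t0 + m * h) k j) c * ∏ l, (y l) ^ (r l))
      (G (c + y) (t0 + m * h) k j))
    (A : ℕ → Fin d → ℝ)
    (hA : ∀ (m : ℕ) (j : Fin d) (ω : Ω), |dW m ω j| ≤ A m j)
    (hmeas : ∀ m : ℕ, Measurable (dW m)) :
    ∀ (n : ℕ), 1 ≤ n → ∀ r : Fin v → ℕ,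
      Filter.Tendsto (fun N : ℕ => ∫ ω, ∏ k, (DWt N n ω k) ^ (r k) ∂P)
        Filter.atTop (nhds (∫ ω, ∏ k, (DW n ω k) ^ (r k) ∂P)) :=
  truncated_effective_noise_moment_convergence_general v d h t0 x0 u G P dW Xhat xc hX0 hX hxc0 hxc
    DW hDW DWt hDWt0 hDWt hUanalytic hGanalytic A hA hmeas
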